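/- arXiv:2006.00941 — 3 statements merged into one kernel-verified Lean document; each statement's English description precedes it below -/
import Mathlib

section
/- Let P ∈ ℤ[x] be irreducible over ℚ, let α ∈ ℂ satisfy P(α) = 0, let p be a prime not dividing the leading coefficient of P, and let a ∈ ℤ satisfy P(a) ≡ 0 (mod p). Then for every non-constant Q ∈ ℤ[x] with Q(α) = 0, we have Q(a) ≡ 0 (mod p). -/
/-!
Over `ℚ`, `P` is irreducible with root `α`, so it divides every rational polynomial vanishing at
`α`; by Gauss's lemma the primitive part of `P` then divides `Q` already in `ℤ[X]`. Since `p` does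
not divide the leading coefficient, it does not divide the content of `P`, so `p ∣ P(a)` forces
`p` to divide the primitive part of `P` at `a`, and hence `Q(a)`.
-/

open Polynomial

namespace Polynomial

variable {R : Type*} [CommRing R] [NormalizedGCDMonoid R]

theorem primPart_dvd_of_irreducible_map_of_aeval_eq_zero [IsDomain R] (K : Type*) [Field K]
    [Algebra R K] [IsFractionRing R K] {B : Type*} [Ring B] [Nontrivial B] [Algebra R B] [Algebra K B]
    [IsScalarTower R K B] {P Q : R[X]} (hirr : Irreducible (P.map (algebraMap R K))) {x : B}
    (hP : aeval x P = 0) (hQ : aeval x Q = 0) : P.primPart ∣ Q := by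
  have hPQ : P.map (algebraMap R K) ∣ Q.map (algebraMap R K) :=
    (hirr.dvd_iff_aeval_eq_zero ((aeval_map_algebraMap K x P).trans hP)).mp
      ((aeval_map_algebraMap K x Q).trans hQ)
  exact (P.isPrimitive_primPart.dvd_iff_fraction_map_dvd_fraction_map K).mpr
    ((Polynomial.map_dvd _ P.primPart_dvd).trans hPQ)

theorem _root_.Prime.dvd_eval_primPart {p : R} (hp : Prime p) {P : R[X]} (hcont : ¬p ∣ P.content)
    {a : R} (ha : p ∣ P.eval a) : p ∣ P.primPart.eval a := by
  rw [P.eq_C_content_mul_primPart, eval_mul, eval_C] at ha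
  exact (hp.dvd_or_dvd ha).resolve_left hcont

end Polynomial

theorem root_mod_p_of_common_root_general (P : Polynomial ℤ)
    (hirr : Irreducible (P.map (Int.castRingHom ℚ)))
    (α : ℂ) (hα : Polynomial.aeval α P = 0)
    (p : ℕ) (hp : p.Prime) (hlead : ¬ (p : ℤ) ∣ P.leadingCoeff)
    (a : ℤ) (ha : (p : ℤ) ∣ P.eval a)
    (Q : Polynomial ℤ) (hQα : Polynomial.aeval α Q = 0) :
    (p : ℤ) ∣ Q.eval a := by
  have hdvd : P.primPart ∣ Q :=
    primPart_dvd_of_irreducible_map_of_aeval_eq_zero ℚ (by rwa [algebraMap_int_eq]) hα hQα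
  have hcont : ¬(p : ℤ) ∣ P.content := fun h => hlead (h.trans (P.content_dvd_coeff _))
  exact ((Nat.prime_iff_prime_int.mp hp).dvd_eval_primPart hcont ha).trans (eval_dvd hdvd)

theorem root_mod_p_of_common_root (P : Polynomial ℤ)
    (hirr : Irreducible (P.map (Int.castRingHom ℚ)))
    (α : ℂ) (hα : Polynomial.aeval α P = 0)
    (p : ℕ) (hp : p.Prime) (hlead : ¬ (p : ℤ) ∣ P.leadingCoeff)
    (a : ℤ) (ha : (p : ℤ) ∣ P.eval a)
    (Q : Polynomial ℤ) (hQ : 0 < Q.natDegree) (hQα : Polynomial.aeval α Q = 0) :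
    (p : ℤ) ∣ Q.eval a :=
  root_mod_p_of_common_root_general P hirr α hα p hp hlead a ha Q hQα
end

section
/- For any P ∈ ℤ[x] and any prime p, there exists P₋ ∈ ℤ[x] such that p ∉ S(P₋) and for every prime q ≠ p, q ∈ S(P₋) if and only if q ∈ S(P). -/
/-!
If `P(0) = 0`, every prime divides a value of `P`, and `pX + 1` has values divisible by every
prime except `p`. Otherwise write `P(0) = p^k u` with `p ∤ u`. Every coefficient of
`P(p^(k+1) X)` is divisible by `p^k`, so `P(p^(k+1) X) = p^k R` with `R(n) ≡ u (mod p)` for all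
`n`. For a prime `q ≠ p`, the factor `p^k` does not affect divisibility by `q`, and the multiples
of `p^(k+1)` meet every residue class mod `q`.
-/

open Polynomial

namespace Polynomial

variable {R : Type*} [CommRing R]

theorem C_dvd_comp_C_mul_X {P : R[X]} {c d : R} (h0 : d ∣ P.coeff 0) (hc : d ∣ c) :
    C d ∣ P.comp (C c * X) := by
  obtain ⟨Q, hQ⟩ := X_dvd_sub_C (p := P)
  have hP : P = C (P.coeff 0) + X * Q := by rw [← hQ]; ring
  rw [hP, add_comp, mul_comp, C_comp, X_comp]
  exact dvd_add (_root_.map_dvd C h0)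
    (dvd_mul_of_dvd_left (dvd_mul_of_dvd_left (_root_.map_dvd C hc) _) _)

theorem exists_dvd_eval_mul_iff {P : R[X]} {q c : R} (h : IsCoprime q c) :
    (∃ n, q ∣ P.eval (c * n)) ↔ ∃ m, q ∣ P.eval m := by
  refine ⟨fun ⟨n, hn⟩ => ⟨c * n, hn⟩, fun ⟨m, hm⟩ => ?_⟩
  obtain ⟨u, v, huv⟩ := h
  -- `c * (v * m) ≡ m [mod q]`, so the two values of `P` agree mod `q`.
  have hshift : q ∣ P.eval (c * (v * m)) - P.eval m :=
    (Dvd.intro (-(u * m)) (by linear_combination (-m) * huv)).trans (sub_dvd_eval_sub _ _ P)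
  exact ⟨v * m, by simpa using dvd_add hshift hm⟩

theorem exists_dvd_eval_iff_of_comp_C_mul_X_eq {P Q : R[X]} {q c d : R}
    (hPQ : P.comp (C c * X) = C d * Q) (hc : IsCoprime q c) (hd : IsCoprime q d) :
    (∃ n, q ∣ Q.eval n) ↔ ∃ n, q ∣ P.eval n := by
  have heval (n : R) : P.eval (c * n) = d * Q.eval n := by
    simpa using congrArg (eval n) hPQ
  rw [← exists_dvd_eval_mul_iff (P := P) hc]
  simp only [heval]
  exact exists_congr fun n => ⟨(dvd_mul_of_dvd_right · d), hd.dvd_of_dvd_mul_left⟩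

theorem not_dvd_eval_of_comp_C_mul_X_eq {P Q : R[X]} {a : R} {k : ℕ}
    (hPQ : P.comp (C (a ^ (k + 1)) * X) = C (a ^ k) * Q) (h0 : ¬a ^ (k + 1) ∣ P.eval 0)
    (n : R) : ¬a ∣ Q.eval n := by
  intro hn
  have hval : a ^ (k + 1) ∣ P.eval (a ^ (k + 1) * n) := by
    rw [show P.eval (a ^ (k + 1) * n) = a ^ k * Q.eval n by simpa using congrArg (eval n) hPQ,
      pow_succ]
    exact mul_dvd_mul_left _ hn
  have hdiff : a ^ (k + 1) ∣ P.eval (a ^ (k + 1) * n) - P.eval 0 :=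
    dvd_trans (by rw [sub_zero]; exact dvd_mul_right _ n) (sub_dvd_eval_sub _ _ P)
  exact h0 (by simpa using dvd_sub hval hdiff)

theorem exists_dvd_eval_C_mul_X_add_one {q c : R} (h : IsCoprime q c) :
    ∃ n, q ∣ (C c * X + 1).eval n := by
  obtain ⟨u, v, huv⟩ := h
  refine ⟨-v, u, ?_⟩
  simp only [eval_add, eval_mul, eval_C, eval_X, eval_one]
  linear_combination -huv

theorem not_dvd_eval_C_mul_X_add_one {a : R} (ha : ¬IsUnit a) (n : R) :
    ¬a ∣ (C a * X + 1).eval n := by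
  intro h
  simp only [eval_add, eval_mul, eval_C, eval_X, eval_one] at h
  exact ha (isUnit_of_dvd_one ((dvd_add_right (dvd_mul_right a n)).mp h))

end Polynomial

theorem remove_prime_divisor (P : Polynomial ℤ) (p : ℕ) (hp : p.Prime) :
    ∃ Pminus : Polynomial ℤ,
      (¬ ∃ n : ℤ, (p : ℤ) ∣ Pminus.eval n) ∧
      ∀ q : ℕ, q.Prime → q ≠ p →
        ((∃ n : ℤ, (q : ℤ) ∣ Pminus.eval n) ↔ (∃ n : ℤ, (q : ℤ) ∣ P.eval n)) := by
  have hpZ : Prime (p : ℤ) := Nat.prime_iff_prime_int.mp hp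
  have hcop {q : ℕ} (hq : q.Prime) (hqp : q ≠ p) : IsCoprime (q : ℤ) p :=
    Nat.isCoprime_iff_coprime.mpr ((Nat.coprime_primes hq hp).mpr hqp)
  by_cases h0 : P.eval 0 = 0
  · refine ⟨C (p : ℤ) * X + 1,
      fun ⟨n, hn⟩ => not_dvd_eval_C_mul_X_add_one hpZ.not_isUnit n hn, fun q hq hqp => ?_⟩
    exact ⟨fun _ => ⟨0, by simp [h0]⟩,
      fun _ => exists_dvd_eval_C_mul_X_add_one (hcop hq hqp)⟩
  · have hfin : FiniteMultiplicity (p : ℤ) (P.eval 0) := .of_prime_left hpZ h0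
    set k := multiplicity (p : ℤ) (P.eval 0)
    obtain ⟨Q, hQ⟩ : C ((p : ℤ) ^ k) ∣ P.comp (C ((p : ℤ) ^ (k + 1)) * X) :=
      C_dvd_comp_C_mul_X (by rw [coeff_zero_eq_eval_zero]; exact pow_multiplicity_dvd _ _)
        (pow_dvd_pow _ k.le_succ)
    refine ⟨Q, fun ⟨n, hn⟩ => not_dvd_eval_of_comp_C_mul_X_eq hQ
      (hfin.not_pow_dvd_of_multiplicity_lt k.lt_succ_self) n hn, fun q hq hqp => ?_⟩
    have hqp' := hcop hq hqp
    exact exists_dvd_eval_iff_of_comp_C_mul_X_eq hQ hqp'.pow_right hqp'.pow_right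
end

section
/- If P(0) ≠ 0 and p^k is the exact power of a prime p dividing P(0), then the polynomial Q(x) = P(p^(k+1)·x)/p^k has integer coefficients, all of its coefficients except the constant term are divisible by p, and hence p ∉ S(Q). -/
/-!
Substituting `x ↦ p^(k+1) x` multiplies the `i`-th coefficient of `P` by `p^((k+1) i)`, which for
`i ≥ 1` is divisible by `p^(k+1)`, while the constant term `P(0)` is divisible by exactly `p^k`.
After dividing by `p^k`, every coefficient of `Q` but the constant one is divisible by `p`, so
`Q(n) ≡ Q(0) = P(0) / p^k ≢ 0 (mod p)` for every integer `n`.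
-/

open Polynomial

namespace Polynomial

variable {R : Type*} [CommRing R]

theorem dvd_eval_sub_coeff_zero {a : R} {Q : R[X]} (h : ∀ i ≠ 0, a ∣ Q.coeff i) (x : R) :
    a ∣ Q.eval x - Q.coeff 0 := by
  have hC : C a ∣ Q - C (Q.coeff 0) := by
    rw [C_dvd_iff_dvd_coeff]
    intro i
    rcases eq_or_ne i 0 with rfl | hi
    · simp
    · simpa [coeff_C, hi] using h i hi
  obtain ⟨S, hS⟩ := hC
  exact ⟨S.eval x, by simpa using congrArg (eval x) hS⟩

theorem C_pow_dvd_comp_C_pow_succ_mul_X {a : R} {k : ℕ} {P : R[X]} (hk : a ^ k ∣ P.coeff 0) :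
    C (a ^ k) ∣ P.comp (C (a ^ (k + 1)) * X) := by
  rw [C_dvd_iff_dvd_coeff]
  intro i
  rw [comp_C_mul_X_coeff]
  rcases eq_or_ne i 0 with rfl | hi
  · simpa using hk
  · exact dvd_mul_of_dvd_right ((pow_dvd_pow a k.le_succ).trans (dvd_pow_self _ hi)) _

variable [IsDomain R]

theorem dvd_coeff_of_C_pow_mul_eq_comp {a : R} {k : ℕ} (ha : a ^ k ≠ 0) {P Q : R[X]}
    (hQ : C (a ^ k) * Q = P.comp (C (a ^ (k + 1)) * X)) {i : ℕ} (hi : i ≠ 0) :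
    a ∣ Q.coeff i := by
  obtain ⟨j, rfl⟩ := Nat.exists_eq_succ_of_ne_zero hi
  have hcoeff : a ^ k * Q.coeff (j + 1) =
      a ^ k * (a * (P.coeff (j + 1) * (a ^ (k + 1)) ^ j)) := by
    rw [← coeff_C_mul, hQ, comp_C_mul_X_coeff]
    ring
  exact ⟨_, mul_left_cancel₀ ha hcoeff⟩

theorem exists_C_pow_mul_eq_comp_not_dvd_eval {a : R} {k : ℕ} {P : R[X]}
    (hk : a ^ k ∣ P.coeff 0) (hk1 : ¬ a ^ (k + 1) ∣ P.coeff 0) :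
    ∃ Q : R[X], C (a ^ k) * Q = P.comp (C (a ^ (k + 1)) * X) ∧
      (∀ i ≠ 0, a ∣ Q.coeff i) ∧ ∀ x, ¬ a ∣ Q.eval x := by
  have ha : a ^ k ≠ 0 := fun h ↦ hk1 <| by
    rw [h, zero_dvd_iff] at hk
    exact hk ▸ dvd_zero _
  obtain ⟨Q, hQ⟩ := C_pow_dvd_comp_C_pow_succ_mul_X hk
  have hcoeff_zero : a ^ k * Q.coeff 0 = P.coeff 0 := by
    rw [← coeff_C_mul, ← hQ, comp_C_mul_X_coeff, pow_zero, mul_one]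
  have hdvd := fun i (hi : i ≠ 0) ↦ dvd_coeff_of_C_pow_mul_eq_comp ha hQ.symm hi
  refine ⟨Q, hQ.symm, hdvd, fun x hx ↦ hk1 ?_⟩
  have h0 : a ∣ Q.coeff 0 := by
    simpa using dvd_sub hx (dvd_eval_sub_coeff_zero hdvd x)
  rw [← hcoeff_zero, pow_succ]
  exact mul_dvd_mul_left _ h0

end Polynomial

theorem scaled_poly_avoids_p_general (P : Polynomial ℤ) (p : ℕ) (k : ℕ)
    (hk : (p : ℤ) ^ k ∣ P.eval 0) (hk1 : ¬ (p : ℤ) ^ (k + 1) ∣ P.eval 0) :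
    ∃ Q : Polynomial ℤ,
      (∀ x : ℤ, (p : ℤ) ^ k * Q.eval x = P.eval ((p : ℤ) ^ (k + 1) * x)) ∧
      (∀ i : ℕ, i ≠ 0 → (p : ℤ) ∣ Q.coeff i) ∧
      ¬ ∃ n : ℤ, (p : ℤ) ∣ Q.eval n := by
  rw [← coeff_zero_eq_eval_zero] at hk hk1
  obtain ⟨Q, hQ, hdvd, hQ0⟩ := exists_C_pow_mul_eq_comp_not_dvd_eval hk hk1
  refine ⟨Q, fun x ↦ ?_, hdvd, fun ⟨n, hn⟩ ↦ hQ0 n hn⟩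
  simpa using congrArg (eval x) hQ

theorem scaled_poly_avoids_p (P : Polynomial ℤ) (p : ℕ) (hp : p.Prime) (k : ℕ)
    (h0 : P.eval 0 ≠ 0)
    (hk : (p : ℤ) ^ k ∣ P.eval 0) (hk1 : ¬ (p : ℤ) ^ (k + 1) ∣ P.eval 0) :
    ∃ Q : Polynomial ℤ,
      (∀ x : ℤ, (p : ℤ) ^ k * Q.eval x = P.eval ((p : ℤ) ^ (k + 1) * x)) ∧
      (∀ i : ℕ, i ≠ 0 → (p : ℤ) ∣ Q.coeff i) ∧
      ¬ ∃ n : ℤ, (p : ℤ) ∣ Q.eval n :=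
  scaled_poly_avoids_p_general P p k hk hk1
end
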